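/- arXiv:2106.09519 — 3 statements merged into one kernel-verified Lean document; each statement's English description precedes it below -/
import Mathlib

section
/- Let M be a graded R-module and K, N graded submodules of M. Then qp-V^g_M(N) ∪ qp-V^g_M(K) = qp-V^g_M(N ∩ K). -/
section ModuleDefs

variable {G R M : Type*} [AddGroup G] [DecidableEq G] [CommRing R]
  [AddCommGroup M] [Module R M]
  (𝒜 : G → AddSubgroup R) [GradedRing 𝒜]
  (ℳ : G → AddSubgroup M) [DirectSum.Decomposition ℳ] [SetLike.GradedSMul 𝒜 ℳ]

def gradedRadical (I : Ideal R) : Set R :=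
  {r : R | ∀ g : G, ∃ n : ℕ, 0 < n ∧ (DirectSum.decompose 𝒜 r g : R) ^ n ∈ I}

/-- A graded submodule: contains the homogeneous components of all its elements. -/
def IsGradedSubmodule (N : Submodule R M) : Prop :=
  ∀ (g : G) ⦃m : M⦄, m ∈ N → (DirectSum.decompose ℳ m g : M) ∈ N

def IsGradedPrimeIdeal (P : Ideal R) : Prop :=
  P ≠ ⊤ ∧ (∀ (g : G) ⦃r : R⦄, r ∈ P → (DirectSum.decompose 𝒜 r g : R) ∈ P) ∧
    ∀ ⦃r s : R⦄, SetLike.IsHomogeneousElem 𝒜 r → SetLike.IsHomogeneousElem 𝒜 s →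
      r * s ∈ P → r ∈ P ∨ s ∈ P

/-- A graded prime submodule `P`: proper graded, and `r • m ∈ P` for homogeneous `r, m`
implies `m ∈ P` or `r ∈ (P :_R M)`. -/
def IsGradedPrimeSubmodule (P : Submodule R M) : Prop :=
  P ≠ ⊤ ∧ IsGradedSubmodule ℳ P ∧
    ∀ ⦃r : R⦄ ⦃m : M⦄, SetLike.IsHomogeneousElem 𝒜 r → SetLike.IsHomogeneousElem ℳ m →
      r • m ∈ P → m ∈ P ∨ r ∈ P.colon ⊤

/-- The graded radical `Gr_M(Q)` of a submodule: the intersection of all graded prime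
submodules containing `Q` (equal to `M` if there are none). -/
def gradedRadicalSubmodule (Q : Submodule R M) : Submodule R M :=
  sInf {P : Submodule R M | IsGradedPrimeSubmodule 𝒜 ℳ P ∧ Q ≤ P}

/-- A graded quasi-primary submodule `Q`: proper graded, and `r • m ∈ Q` for homogeneous
`r, m` implies `r ∈ Gr((Q :_R M))` or `m ∈ Gr_M(Q)`. -/
def IsGradedQuasiPrimarySubmodule (Q : Submodule R M) : Prop :=
  Q ≠ ⊤ ∧ IsGradedSubmodule ℳ Q ∧
    ∀ ⦃r : R⦄ ⦃m : M⦄, SetLike.IsHomogeneousElem 𝒜 r → SetLike.IsHomogeneousElem ℳ m →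
      r • m ∈ Q → r ∈ gradedRadical 𝒜 (Q.colon ⊤) ∨ m ∈ gradedRadicalSubmodule 𝒜 ℳ Q

/-- `K` satisfies the graded primeful property if every graded prime ideal containing
`(K :_R M)` is of the form `(P :_R M)` for a graded prime submodule `P ⊇ K`. -/
def SatisfiesGradedPrimeful (K : Submodule R M) : Prop :=
  ∀ p : Ideal R, IsGradedPrimeIdeal 𝒜 p → K.colon ⊤ ≤ p →
    ∃ P : Submodule R M, IsGradedPrimeSubmodule 𝒜 ℳ P ∧ K ≤ P ∧ P.colon ⊤ = p

/-- The graded quasi-primary spectrum of `M`: the graded quasi-primary submodules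
satisfying the graded primeful property. -/
def qpSpec : Set (Submodule R M) :=
  {Q : Submodule R M | IsGradedQuasiPrimarySubmodule 𝒜 ℳ Q ∧ SatisfiesGradedPrimeful 𝒜 ℳ Q}

/-- The variety `qp-V^g_M(K) = { Q ∈ qp.Spec_g(M) : Gr((Q:_R M)) ⊇ Gr((K:_R M)) }`. -/
def qpV (K : Submodule R M) : Set (qpSpec 𝒜 ℳ) :=
  {Q : qpSpec 𝒜 ℳ | gradedRadical 𝒜 (K.colon ⊤) ⊆ gradedRadical 𝒜 (Q.1.colon ⊤)}

/-- The quasi-Zariski topology on `qp.Spec_g(M)`, generated by the complements of the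
varieties of graded submodules. -/
def qpZariski : TopologicalSpace (qpSpec 𝒜 ℳ) :=
  TopologicalSpace.generateFrom
    {U : Set (qpSpec 𝒜 ℳ) | ∃ K : Submodule R M, IsGradedSubmodule ℳ K ∧ U = (qpV 𝒜 ℳ K)ᶜ}

/-! The inclusion `⊆` is monotonicity of `Gr`, since `(N ∩ K :_R M) = (N :_R M) ∩ (K :_R M)`.
For `⊇`, the point is that for `Q ∈ qp.Spec_g(M)` the ideal `Gr((Q :_R M))` is prime on
homogeneous elements. If `r s ∈ (Q :_R M)` with `r ∉ Gr((Q :_R M))`, quasi-primarity puts `s M`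
inside `Gr_M(Q)`, hence inside every graded prime `P ⊇ Q`. By the primeful property every graded
prime ideal over `(Q :_R M)`, in particular the homogeneous core of any prime ideal over it, is such
a `(P :_R M)`, so `s` lies in the radical of `(Q :_R M)`. Now homogeneous witnesses
`a ∈ Gr((N :_R M)) \ Gr((Q :_R M))` and `b ∈ Gr((K :_R M)) \ Gr((Q :_R M))` would give
`a b ∈ Gr((N ∩ K :_R M)) ⊆ Gr((Q :_R M))`, which contradicts primality. -/

open DirectSum

theorem coe_decompose_smul_add_of_right_mem (a : R) {m : M} (i : G) {j : G} (hm : m ∈ ℳ j) :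
    (decompose ℳ (a • m) (i + j) : M) = (decompose 𝒜 a i : R) • m := by
  induction a using DirectSum.Decomposition.inductionOn 𝒜 with
  | zero => simp
  | @homogeneous k a =>
    obtain ⟨a, ha⟩ := a
    have ham : a • m ∈ ℳ (k + j) := SetLike.GradedSMul.smul_mem ha hm
    rcases eq_or_ne k i with rfl | hki
    · rw [decompose_of_mem_same ℳ ham, decompose_of_mem_same 𝒜 ha]
    · rw [decompose_of_mem_ne ℳ ham (fun h => hki (add_right_cancel h)),
        decompose_of_mem_ne 𝒜 ha hki, zero_smul]
  | add a b ha hb =>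
    simp only [add_smul, decompose_add, DirectSum.add_apply, AddMemClass.coe_add, ha, hb]

variable {ℳ} in
theorem IsGradedSubmodule.isHomogeneous_colon {Q : Submodule R M} (hQ : IsGradedSubmodule ℳ Q) :
    (Q.colon ⊤).IsHomogeneous 𝒜 := by
  intro i r hr
  refine Submodule.mem_colon.2 fun m _ => ?_
  induction m using DirectSum.Decomposition.inductionOn ℳ with
  | zero => simp
  | homogeneous m =>
    rw [← coe_decompose_smul_add_of_right_mem 𝒜 ℳ r i m.2]
    exact hQ _ (Submodule.mem_colon.1 hr _ trivial)
  | add m m' hm hm' => simpa only [smul_add] using Q.add_mem (hm trivial) (hm' trivial)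

theorem Ideal.IsPrime.isGradedPrimeIdeal_homogeneousCore {p : Ideal R} (hp : p.IsPrime) :
    IsGradedPrimeIdeal 𝒜 (Ideal.homogeneousCore 𝒜 p).toIdeal :=
  ⟨fun h => hp.ne_top (top_le_iff.1 (h ▸ Ideal.toIdeal_homogeneousCore_le 𝒜 p)),
    (Ideal.homogeneousCore 𝒜 p).isHomogeneous,
    fun _ _ hr hs hrs => (hp.mem_or_mem (Ideal.toIdeal_homogeneousCore_le 𝒜 p hrs)).imp
      (Ideal.mem_homogeneousCore_of_homogeneous_of_mem hr)
      (Ideal.mem_homogeneousCore_of_homogeneous_of_mem hs)⟩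

section GradedRadical

variable {𝒜} {I J : Ideal R} {x : R} {i : G}

theorem gradedRadical_mono (h : I ≤ J) : gradedRadical 𝒜 I ⊆ gradedRadical 𝒜 J :=
  fun _ hx g => (hx g).imp fun _ => And.imp_right (@h _)

theorem mem_gradedRadical_iff_of_mem (hx : x ∈ 𝒜 i) :
    x ∈ gradedRadical 𝒜 I ↔ ∃ n, 0 < n ∧ x ^ n ∈ I := by
  refine ⟨fun h => by simpa only [decompose_of_mem_same 𝒜 hx] using h i, fun h g => ?_⟩
  rcases eq_or_ne i g with rfl | hig
  · simpa only [decompose_of_mem_same 𝒜 hx] using h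
  · exact ⟨1, one_pos, by simp [decompose_of_mem_ne 𝒜 hx hig]⟩

theorem mem_gradedRadical_iff_mem_radical (hI : I ≠ ⊤) (hx : x ∈ 𝒜 i) :
    x ∈ gradedRadical 𝒜 I ↔ x ∈ I.radical := by
  rw [mem_gradedRadical_iff_of_mem hx]
  refine ⟨fun ⟨n, _, hxn⟩ => ⟨n, hxn⟩, fun ⟨n, hxn⟩ => ⟨n, Nat.pos_of_ne_zero ?_, hxn⟩⟩
  rintro rfl
  exact hI ((Ideal.eq_top_iff_one I).2 (by simpa using hxn))

theorem pow_mem_gradedRadical_iff (hx : x ∈ 𝒜 i) {n : ℕ} (hn : 0 < n) :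
    x ^ n ∈ gradedRadical 𝒜 I ↔ x ∈ gradedRadical 𝒜 I := by
  rw [mem_gradedRadical_iff_of_mem (SetLike.pow_mem_graded n hx), mem_gradedRadical_iff_of_mem hx]
  constructor
  · rintro ⟨k, hk, hxk⟩
    exact ⟨n * k, Nat.mul_pos hn hk, by rwa [pow_mul]⟩
  · rintro ⟨k, hk, hxk⟩
    exact ⟨k, hk, by rw [← pow_mul, mul_comm, pow_mul]; exact I.pow_mem_of_mem hxk n hn⟩

theorem gradedRadical_subset_gradedRadical_iff :
    gradedRadical 𝒜 I ⊆ gradedRadical 𝒜 J ↔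
      ∀ i, ∀ x ∈ 𝒜 i, x ∈ gradedRadical 𝒜 I → x ∈ gradedRadical 𝒜 J := by
  refine ⟨fun h _ _ _ hx => h hx, fun h x hx g => ?_⟩
  have hxg := SetLike.coe_mem (decompose 𝒜 x g)
  rw [← mem_gradedRadical_iff_of_mem hxg]
  exact h g _ hxg ((mem_gradedRadical_iff_of_mem hxg).2 (hx g))

theorem mul_mem_gradedRadical_inf {a b : R} {j : G} (ha : a ∈ 𝒜 i) (hb : b ∈ 𝒜 j)
    (haI : a ∈ gradedRadical 𝒜 I) (hbJ : b ∈ gradedRadical 𝒜 J) :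
    a * b ∈ gradedRadical 𝒜 (I ⊓ J) := by
  obtain ⟨n, hn, han⟩ := (mem_gradedRadical_iff_of_mem ha).1 haI
  obtain ⟨k, hk, hbk⟩ := (mem_gradedRadical_iff_of_mem hb).1 hbJ
  refine (mem_gradedRadical_iff_of_mem (SetLike.mul_mem_graded ha hb)).2
    ⟨n * k, Nat.mul_pos hn hk, ?_, ?_⟩
  · rw [mul_pow, pow_mul]
    exact I.mul_mem_right _ (I.pow_mem_of_mem han k hk)
  · rw [mul_pow, pow_mul' b]
    exact J.mul_mem_left _ (J.pow_mem_of_mem hbk n hn)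

theorem gradedRadical_inf_subset_iff {I₁ I₂ : Ideal R}
    (hJ : ∀ ⦃a b : R⦄ ⦃i j : G⦄, a ∈ 𝒜 i → b ∈ 𝒜 j → a * b ∈ gradedRadical 𝒜 J →
      a ∈ gradedRadical 𝒜 J ∨ b ∈ gradedRadical 𝒜 J) :
    gradedRadical 𝒜 (I₁ ⊓ I₂) ⊆ gradedRadical 𝒜 J ↔
      gradedRadical 𝒜 I₁ ⊆ gradedRadical 𝒜 J ∨ gradedRadical 𝒜 I₂ ⊆ gradedRadical 𝒜 J := by
  refine ⟨fun h => ?_, ?_⟩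
  · by_contra! hc
    simp only [gradedRadical_subset_gradedRadical_iff, not_forall] at hc
    obtain ⟨⟨i, a, ha, haI, haJ⟩, ⟨j, b, hb, hbI, hbJ⟩⟩ := hc
    exact (hJ ha hb (h (mul_mem_gradedRadical_inf ha hb haI hbI))).elim haJ hbJ
  · rintro (h | h)
    exacts [(gradedRadical_mono inf_le_left).trans h, (gradedRadical_mono inf_le_right).trans h]

end GradedRadical

section QuasiPrimary

variable {𝒜 ℳ}

omit [AddGroup G] [GradedRing 𝒜] [SetLike.GradedSMul 𝒜 ℳ] in
theorem gradedRadicalSubmodule_le {Q P : Submodule R M} (hP : IsGradedPrimeSubmodule 𝒜 ℳ P)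
    (hQP : Q ≤ P) : gradedRadicalSubmodule 𝒜 ℳ Q ≤ P :=
  sInf_le ⟨hP, hQP⟩

theorem SatisfiesGradedPrimeful.mem_gradedRadical_colon {Q : Submodule R M}
    (hQ : SatisfiesGradedPrimeful 𝒜 ℳ Q) (hQtop : Q ≠ ⊤) (hQgr : IsGradedSubmodule ℳ Q)
    {s : R} {j : G} (hs : s ∈ 𝒜 j) (hsQ : s ∈ (gradedRadicalSubmodule 𝒜 ℳ Q).colon ⊤) :
    s ∈ gradedRadical 𝒜 (Q.colon ⊤) := by
  have hcolon : Q.colon ⊤ ≠ ⊤ := fun h =>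
    hQtop (eq_top_iff.2 fun m _ => (Submodule.colon_eq_top_iff_subset _).1 h trivial)
  rw [mem_gradedRadical_iff_mem_radical hcolon hs, Ideal.radical_eq_sInf]
  refine Submodule.mem_sInf.2 ?_
  rintro p ⟨hQp, hp⟩
  have hQcore : Q.colon ⊤ ≤ (Ideal.homogeneousCore 𝒜 p).toIdeal :=
    (hQgr.isHomogeneous_colon 𝒜).toIdeal_homogeneousCore_eq_self ▸
      Ideal.homogeneousCore_mono 𝒜 hQp
  obtain ⟨P, hP, hQP, hPp⟩ := hQ _ (hp.isGradedPrimeIdeal_homogeneousCore 𝒜) hQcore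
  refine Ideal.toIdeal_homogeneousCore_le 𝒜 p (hPp ▸ ?_)
  exact Submodule.colon_mono (gradedRadicalSubmodule_le hP hQP) le_rfl hsQ

theorem IsGradedQuasiPrimarySubmodule.mem_colon_gradedRadicalSubmodule {Q : Submodule R M}
    (hQ : IsGradedQuasiPrimarySubmodule 𝒜 ℳ Q) {r s : R} {i j : G} (hr : r ∈ 𝒜 i)
    (hs : s ∈ 𝒜 j) (hrs : r * s ∈ Q.colon ⊤) (hrQ : r ∉ gradedRadical 𝒜 (Q.colon ⊤)) :
    s ∈ (gradedRadicalSubmodule 𝒜 ℳ Q).colon ⊤ := by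
  refine Submodule.mem_colon.2 fun m _ => ?_
  induction m using DirectSum.Decomposition.inductionOn ℳ with
  | zero => simp
  | homogeneous m =>
    have hrsm : r • s • (m : M) ∈ Q := by
      rw [← mul_smul]
      exact Submodule.mem_colon.1 hrs _ trivial
    exact (hQ.2.2 ⟨i, hr⟩ (SetLike.IsHomogeneousElem.graded_smul ⟨j, hs⟩ ⟨_, m.2⟩)
      hrsm).resolve_left hrQ
  | add m m' hm hm' => simpa only [smul_add] using Submodule.add_mem _ (hm trivial) (hm' trivial)

theorem mem_or_mem_gradedRadical_colon_of_mem_qpSpec {Q : Submodule R M} (hQ : Q ∈ qpSpec 𝒜 ℳ)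
    {r s : R} {i j : G} (hr : r ∈ 𝒜 i) (hs : s ∈ 𝒜 j)
    (hrs : r * s ∈ gradedRadical 𝒜 (Q.colon ⊤)) :
    r ∈ gradedRadical 𝒜 (Q.colon ⊤) ∨ s ∈ gradedRadical 𝒜 (Q.colon ⊤) := by
  obtain ⟨hQqp, hQpf⟩ := hQ
  obtain ⟨n, hn, hrsn⟩ := (mem_gradedRadical_iff_of_mem (SetLike.mul_mem_graded hr hs)).1 hrs
  rw [mul_pow] at hrsn
  have hrn := SetLike.pow_mem_graded n hr
  have hsn := SetLike.pow_mem_graded n hs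
  rw [← pow_mem_gradedRadical_iff hr hn, ← pow_mem_gradedRadical_iff hs hn]
  exact or_iff_not_imp_left.2 fun hrQ => hQpf.mem_gradedRadical_colon hQqp.1 hQqp.2.1 hsn
    (hQqp.mem_colon_gradedRadicalSubmodule hrn hsn hrsn hrQ)

end QuasiPrimary

theorem qpV_union (N K : Submodule R M) :
    qpV 𝒜 ℳ N ∪ qpV 𝒜 ℳ K = qpV 𝒜 ℳ (N ⊓ K) := by
  ext Q
  simp only [qpV, Set.mem_union, Submodule.inf_colon]
  exact (gradedRadical_inf_subset_iff fun _ _ _ _ =>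
    mem_or_mem_gradedRadical_colon_of_mem_qpSpec Q.2).symm

end ModuleDefs
end

section
/- Let M be a graded R-module and K a graded submodule of M. Then qp-V^g_M(K) = qp-V^g_M(Gr((K:_R M))M). -/
/-! One inclusion is immediate: every homogeneous component of an element of `Gr((K:M))` lies
in `Gr((K:M))` itself, hence in `(Gr((K:M))M : M)`. For the other, `(Q:M)` is a graded ideal, so
`Gr((Q:M))` is the intersection of the graded prime ideals `p ⊇ (Q:M)` (a Zorn argument on graded
ideals avoiding the powers of a homogeneous element). For each such `p` the primeful property
gives a graded prime submodule `P ⊇ Q` with `(P:M) = p`, and `Gr((K:M)) ⊆ p` forces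
`Gr((K:M))M ⊆ pM ⊆ P`, hence `(Gr((K:M))M : M) ⊆ p`. -/

section ModuleDefs

variable {G R M : Type*} [AddGroup G] [DecidableEq G] [CommRing R]
  [AddCommGroup M] [Module R M]
  (𝒜 : G → AddSubgroup R) [GradedRing 𝒜]
  (ℳ : G → AddSubgroup M) [DirectSum.Decomposition ℳ] [SetLike.GradedSMul 𝒜 ℳ]

open DirectSum

theorem DirectSum.coe_decompose_smul_add_of_mem {ι A N σ τ : Type*} [AddRightCancelMonoid ι]
    [DecidableEq ι] [Semiring A] [AddCommMonoid N] [Module A N] [SetLike σ A]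
    [AddSubmonoidClass σ A] (𝒜 : ι → σ) [GradedRing 𝒜] [SetLike τ N] [AddSubmonoidClass τ N]
    (ℳ : ι → τ) [Decomposition ℳ] [SetLike.GradedSMul 𝒜 ℳ] (a : A) {m : N} {i j : ι}
    (hm : m ∈ ℳ j) : (decompose ℳ (a • m) (i + j) : N) = (decompose 𝒜 a i : A) • m := by
  induction a using DirectSum.Decomposition.inductionOn 𝒜 with
  | zero => simp
  | @homogeneous k x =>
    obtain ⟨x, hx⟩ := x
    have hxm : x • m ∈ ℳ (k + j) := SetLike.GradedSMul.smul_mem hx hm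
    by_cases hk : k = i
    · subst hk
      rw [decompose_of_mem_same ℳ hxm, decompose_of_mem_same 𝒜 hx]
    · rw [decompose_of_mem_ne ℳ hxm (hk ∘ add_right_cancel), decompose_of_mem_ne 𝒜 hx hk,
        zero_smul]
  | add a b ha hb => simp only [add_smul, decompose_add, add_apply, AddMemClass.coe_add, ha, hb]

theorem Submodule.IsHomogeneous.colon_top {ι A N σ τ : Type*} [AddRightCancelMonoid ι]
    [DecidableEq ι] [Semiring A] [AddCommMonoid N] [Module A N] [SetLike σ A]
    [AddSubmonoidClass σ A] (𝒜 : ι → σ) [GradedRing 𝒜] [SetLike τ N] [AddSubmonoidClass τ N]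
    {ℳ : ι → τ} [Decomposition ℳ] [SetLike.GradedSMul 𝒜 ℳ] {L : Submodule A N}
    (hL : L.IsHomogeneous ℳ) : (L.colon ⊤).IsHomogeneous 𝒜 := by
  classical
  intro i a ha
  refine Submodule.mem_colon.2 fun m _ => ?_
  rw [← sum_support_decompose ℳ m, Finset.smul_sum]
  refine Submodule.sum_mem L fun j _ => ?_
  rw [← coe_decompose_smul_add_of_mem 𝒜 ℳ a (decompose ℳ m j).2]
  exact hL _ (Submodule.mem_colon.1 ha _ trivial)

theorem Submodule.le_colon_smul_top {A N : Type*} [Semiring A] [AddCommMonoid N]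
    [Module A N] (I : Ideal A) : I ≤ (I • ⊤ : Submodule A N).colon ⊤ :=
  fun _ ha => Submodule.mem_colon.2 fun _ _ => Submodule.smul_mem_smul ha trivial

theorem decompose_mem_gradedRadical {I : Ideal R} {r : R} (hr : r ∈ gradedRadical 𝒜 I)
    (g : G) : (decompose 𝒜 r g : R) ∈ gradedRadical 𝒜 I := by
  intro h
  by_cases hgh : h = g
  · subst hgh
    simpa only [decompose_of_mem_same 𝒜 (decompose 𝒜 r h).2] using hr h
  · refine ⟨1, one_pos, ?_⟩
    rw [decompose_of_mem_ne 𝒜 (decompose 𝒜 r g).2 (Ne.symm hgh), pow_one]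
    exact I.zero_mem

theorem gradedRadical_subset_gradedRadical_of_subset {I J : Ideal R}
    (h : gradedRadical 𝒜 I ⊆ J) : gradedRadical 𝒜 I ⊆ gradedRadical 𝒜 J :=
  fun _ hr g => ⟨1, one_pos, by rw [pow_one]; exact h (decompose_mem_gradedRadical 𝒜 hr g)⟩

namespace IsGradedPrimeIdeal

variable {𝒜} {p : Ideal R}

theorem mem_of_pow_mem (hp : IsGradedPrimeIdeal 𝒜 p) {x : R}
    (hx : SetLike.IsHomogeneousElem 𝒜 x) {n : ℕ} (hxn : x ^ n ∈ p) : x ∈ p := by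
  obtain ⟨i, hi⟩ := hx
  induction n with
  | zero => exact absurd ((Ideal.eq_top_iff_one p).2 (by rwa [pow_zero] at hxn)) hp.1
  | succ n ih =>
    rw [pow_succ] at hxn
    exact (hp.2.2 ⟨n • i, SetLike.pow_mem_graded n hi⟩ ⟨i, hi⟩ hxn).elim ih id

theorem gradedRadical_subset (hp : IsGradedPrimeIdeal 𝒜 p) {I : Ideal R} (hIp : I ≤ p) :
    gradedRadical 𝒜 I ⊆ p := by
  classical
  intro r hr
  rw [SetLike.mem_coe, ← sum_support_decompose 𝒜 r]
  refine Ideal.sum_mem p fun g _ => ?_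
  obtain ⟨n, -, hn⟩ := hr g
  exact hp.mem_of_pow_mem ⟨g, (decompose 𝒜 r g).2⟩ (hIp hn)

end IsGradedPrimeIdeal

theorem isGradedPrimeIdeal_of_maximally_disjoint {I : Ideal R} (hI : I.IsHomogeneous 𝒜)
    (S : Submonoid R) (disjoint : Disjoint (I : Set R) S)
    (maximally_disjoint : ∀ J : Ideal R, J.IsHomogeneous 𝒜 → I < J → ¬Disjoint (J : Set R) S) :
    IsGradedPrimeIdeal 𝒜 I := by
  refine ⟨fun hI_top => disjoint.ne_of_mem (hI_top ▸ Submodule.mem_top) S.one_mem rfl, hI, ?_⟩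
  intro a b ha hb hab
  by_contra! hnot
  have meets : ∀ c, SetLike.IsHomogeneousElem 𝒜 c → c ∉ I →
      ∃ s ∈ S, s ∈ I ⊔ Ideal.span {c} := fun c hc hcI => by
    have hom : (I ⊔ Ideal.span {c}).IsHomogeneous 𝒜 :=
      hI.sup (Ideal.homogeneous_span 𝒜 _ fun x hx => (Set.mem_singleton_iff.1 hx) ▸ hc)
    obtain ⟨s, hsJ, hsS⟩ := Set.not_disjoint_iff.1
      (maximally_disjoint _ hom (Submodule.lt_sup_iff_notMem.2 hcI))
    exact ⟨s, hsS, hsJ⟩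
  obtain ⟨s, hsS, hs⟩ := meets a ha hnot.1
  obtain ⟨t, htS, ht⟩ := meets b hb hnot.2
  have hprod : (I ⊔ Ideal.span {a}) * (I ⊔ Ideal.span {b}) ≤ I := by
    simp only [Ideal.sup_mul, Ideal.mul_sup, Ideal.span_singleton_mul_span_singleton, sup_le_iff]
    exact ⟨⟨Ideal.mul_le_right, Ideal.mul_le_right⟩, Ideal.mul_le_left,
      (Ideal.span_singleton_le_iff_mem I).2 hab⟩
  exact disjoint.ne_of_mem (hprod (Ideal.mul_mem_mul hs ht)) (S.mul_mem hsS htS) rfl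

theorem exists_isGradedPrimeIdeal_le_disjoint {I : Ideal R} (hI : I.IsHomogeneous 𝒜)
    (S : Submonoid R) (disjoint : Disjoint (I : Set R) S) :
    ∃ p : Ideal R, IsGradedPrimeIdeal 𝒜 p ∧ I ≤ p ∧ Disjoint (p : Set R) S := by
  obtain ⟨p, hIp, hp⟩ := zorn_le_nonempty₀
    {J : Ideal R | J.IsHomogeneous 𝒜 ∧ Disjoint (J : Set R) S} (fun c hc hchain J hJ => by
      refine ⟨sSup c, ⟨Ideal.IsHomogeneous.sSup fun J hJ => (hc hJ).1, ?_⟩,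
        fun _ => le_sSup⟩
      refine Set.disjoint_left.2 fun x hx => ?_
      obtain ⟨J', hJ'c, hxJ'⟩ :=
        (Submodule.mem_sSup_of_directed ⟨J, hJ⟩ hchain.directedOn).1 hx
      exact Set.disjoint_left.1 (hc hJ'c).2 hxJ') I ⟨hI, disjoint⟩
  exact ⟨p, isGradedPrimeIdeal_of_maximally_disjoint 𝒜 hp.1.1 S hp.1.2
    fun J hJ hpJ hdisj => hp.not_prop_of_gt hpJ ⟨hJ, hdisj⟩, hIp, hp.1.2⟩

theorem mem_gradedRadical_of_forall_mem {I : Ideal R} (hI : I.IsHomogeneous 𝒜) {r : R}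
    (hr : ∀ p : Ideal R, IsGradedPrimeIdeal 𝒜 p → I ≤ p → r ∈ p) :
    r ∈ gradedRadical 𝒜 I := by
  intro g
  by_contra! hpow
  set x := (decompose 𝒜 r g : R)
  have disjoint : Disjoint (I : Set R) (Submonoid.powers x) := by
    refine Set.disjoint_right.2 ?_
    rintro _ ⟨n, rfl⟩ hxn
    exact hpow (n + 1) n.succ_pos (pow_succ' x n ▸ I.mul_mem_left x hxn)
  obtain ⟨p, hp, hIp, hpx⟩ := exists_isGradedPrimeIdeal_le_disjoint 𝒜 hI _ disjoint
  exact Set.disjoint_left.1 hpx (hp.2.1 g (hr p hp hIp)) (Submonoid.mem_powers x)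

omit [SetLike.GradedSMul 𝒜 ℳ] in
theorem SatisfiesGradedPrimeful.colon_smul_top_le {Q : Submodule R M}
    (hQ : SatisfiesGradedPrimeful 𝒜 ℳ Q) {p : Ideal R} (hp : IsGradedPrimeIdeal 𝒜 p)
    (hQp : Q.colon ⊤ ≤ p) {J : Ideal R} (hJp : J ≤ p) :
    (J • ⊤ : Submodule R M).colon ⊤ ≤ p := by
  obtain ⟨P, -, -, rfl⟩ := hQ p hp hQp
  exact Submodule.colon_mono
    (Submodule.smul_le.2 fun j hj m _ => Submodule.mem_colon.1 (hJp hj) m trivial) le_rfl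

theorem qpV_eq_qpV_gradedRadical_smul (K : Submodule R M) :
    qpV 𝒜 ℳ K =
      qpV 𝒜 ℳ (Ideal.span (gradedRadical 𝒜 (K.colon ⊤)) • (⊤ : Submodule R M)) := by
  set J := Ideal.span (gradedRadical 𝒜 (K.colon ⊤))
  ext ⟨Q, hQ, hQ_primeful⟩
  refine ⟨fun hKQ r hr => ?_, fun hJQ => ?_⟩
  · refine mem_gradedRadical_of_forall_mem 𝒜 (Submodule.IsHomogeneous.colon_top 𝒜 hQ.2.1)
      fun p hp hQp => ?_
    have hJp : J ≤ p := Ideal.span_le.2 (hKQ.trans (hp.gradedRadical_subset hQp))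
    exact hp.gradedRadical_subset (hQ_primeful.colon_smul_top_le 𝒜 ℳ hp hQp hJp) hr
  · exact (gradedRadical_subset_gradedRadical_of_subset 𝒜
      (Ideal.subset_span.trans (Submodule.le_colon_smul_top J))).trans hJQ

end ModuleDefs
end

section
/- Let M be a graded R-module. The space (qp.Spec_g(M), q.τ^g) is a T_0-space if and only if the natural map φ: qp.Spec_g(M) → Spec_g(R/Ann(M)), Q ↦ Gr((Q:_R M))/Ann(M), is injective. -/
theorem specializes_generateFrom_iff {α : Type*} {g : Set (Set α)} {x y : α} :
    @Specializes α (TopologicalSpace.generateFrom g) x y ↔ ∀ s ∈ g, y ∈ s → x ∈ s := by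
  let := TopologicalSpace.generateFrom g
  rw [specializes_iff_pure, ← Filter.tendsto_id', TopologicalSpace.tendsto_nhds_generateFrom_iff]
  rfl

theorem Ideal.mem_homogeneousCore_iff {ι σ A : Type*} [Semiring A] [SetLike σ A]
    [AddSubmonoidClass σ A] {𝒜 : ι → σ} [DecidableEq ι] [AddMonoid ι] [GradedRing 𝒜]
    {I : Ideal A} {x : A} :
    x ∈ (I.homogeneousCore 𝒜).toIdeal ↔ ∀ i, (DirectSum.decompose 𝒜 x i : A) ∈ I := by
  refine ⟨fun hx i =>
    I.toIdeal_homogeneousCore_le 𝒜 ((I.homogeneousCore 𝒜).isHomogeneous i hx), fun hx => ?_⟩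
  classical
  rw [← DirectSum.sum_support_decompose 𝒜 x]
  exact Ideal.sum_mem _ fun i _ =>
    Ideal.mem_homogeneousCore_of_homogeneous_of_mem (SetLike.isHomogeneousElem_coe _) (hx i)

section

open DirectSum

variable {G R M : Type*} [AddGroup G] [DecidableEq G] [CommRing R]
  [AddCommGroup M] [Module R M]
  (𝒜 : G → AddSubgroup R) [GradedRing 𝒜]
  (ℳ : G → AddSubgroup M) [DirectSum.Decomposition ℳ]

theorem gradedRadical_eq_homogeneousCore_radical (I : Ideal R) :
    gradedRadical 𝒜 I = (I.radical.homogeneousCore 𝒜).toIdeal := by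
  ext r
  simp only [gradedRadical, Set.mem_ofPred_eq, SetLike.mem_coe, Ideal.mem_homogeneousCore_iff]
  refine forall_congr' fun g => ⟨fun ⟨n, _, hn⟩ => ⟨n, hn⟩, fun ⟨n, hn⟩ => ?_⟩
  -- `gradedRadical` demands a positive exponent, and `x ^ n ∈ I` gives `x ^ (n + 1) ∈ I`
  exact ⟨n + 1, n.succ_pos, pow_succ' (decompose 𝒜 r g : R) n ▸ I.mul_mem_left _ hn⟩

theorem span_gradedRadical (I : Ideal R) :
    Ideal.span (gradedRadical 𝒜 I) = (I.radical.homogeneousCore 𝒜).toIdeal := by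
  rw [gradedRadical_eq_homogeneousCore_radical, Ideal.span_eq]

variable {𝒜 ℳ} in
theorem qpZariski_specializes_iff {Q P : qpSpec 𝒜 ℳ} :
    @Specializes _ (qpZariski 𝒜 ℳ) Q P ↔
      gradedRadical 𝒜 (Q.1.colon ⊤) ⊆ gradedRadical 𝒜 (P.1.colon ⊤) := by
  rw [qpZariski, specializes_generateFrom_iff]
  refine ⟨fun h => ?_, fun h => ?_⟩
  · by_contra hQP
    exact h _ ⟨Q.1, Q.2.1.2.1, rfl⟩ hQP (Set.Subset.refl _)
  · rintro _ ⟨K, -, rfl⟩ hP hQ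
    exact hP (hQ.trans h)

variable {𝒜 ℳ} in
theorem qpZariski_inseparable_iff {Q P : qpSpec 𝒜 ℳ} :
    @Inseparable _ (qpZariski 𝒜 ℳ) Q P ↔
      gradedRadical 𝒜 (Q.1.colon ⊤) = gradedRadical 𝒜 (P.1.colon ⊤) := by
  rw [@inseparable_iff_specializes_and _ (qpZariski 𝒜 ℳ), qpZariski_specializes_iff,
    qpZariski_specializes_iff, Set.Subset.antisymm_iff]

variable [SetLike.GradedSMul 𝒜 ℳ]

variable {𝒜 ℳ} in
theorem coe_decompose_smul_of_mem {h : G} {m : M} (hm : m ∈ ℳ h) (r : R) (g : G) :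
    (decompose ℳ (r • m) (g + h) : M) = (decompose 𝒜 r g : R) • m := by
  induction r using DirectSum.Decomposition.inductionOn 𝒜 with
  | zero => simp
  | @homogeneous i r =>
    have hrm : (r : R) • m ∈ ℳ (i + h) := SetLike.GradedSMul.smul_mem r.2 hm
    by_cases hig : i = g
    · subst hig
      rw [decompose_of_mem_same ℳ hrm, decompose_of_mem_same 𝒜 r.2]
    · rw [decompose_of_mem_ne ℳ hrm (fun h' => hig (add_right_cancel h')),
        decompose_of_mem_ne 𝒜 r.2 hig, zero_smul]
  | add a b ha hb =>
    rw [add_smul, decompose_add, decompose_add, DirectSum.add_apply, DirectSum.add_apply,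
      AddSubgroup.coe_add, AddSubgroup.coe_add, ha, hb, add_smul]

variable {ℳ} in
theorem IsGradedSubmodule.colon_isHomogeneous {N : Submodule R M} (hN : IsGradedSubmodule ℳ N) :
    (N.colon ⊤).IsHomogeneous 𝒜 := by
  intro g r hr
  suffices ∀ m : M, (decompose 𝒜 r g : R) • m ∈ N from
    Submodule.mem_colon.2 fun m _ => this m
  intro m
  induction m using DirectSum.Decomposition.inductionOn ℳ with
  | zero => simp
  | @homogeneous h m =>
    rw [← coe_decompose_smul_of_mem m.2]
    exact hN _ (Submodule.mem_colon.1 hr m trivial)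
  | add a b ha hb => rw [smul_add]; exact N.add_mem ha hb

variable {ℳ} in
theorem IsGradedSubmodule.annihilator_le_span_gradedRadical_colon {N : Submodule R M}
    (hN : IsGradedSubmodule ℳ N) :
    (⊤ : Submodule R M).annihilator ≤ Ideal.span (gradedRadical 𝒜 (N.colon ⊤)) := by
  rw [span_gradedRadical]
  calc (⊤ : Submodule R M).annihilator ≤ N.colon ⊤ := fun r hr => Submodule.mem_colon.2 fun m _ =>
        (Submodule.mem_annihilator.1 hr m trivial).symm ▸ N.zero_mem
    _ = ((N.colon ⊤).homogeneousCore 𝒜).toIdeal :=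
      ((hN.colon_isHomogeneous 𝒜).toIdeal_homogeneousCore_eq_self).symm
    _ ≤ _ := Ideal.homogeneousCore_mono 𝒜 Ideal.le_radical

variable {ℳ} in
theorem map_mk_span_gradedRadical_colon_eq_iff {N N' : Submodule R M}
    (hN : IsGradedSubmodule ℳ N) (hN' : IsGradedSubmodule ℳ N') :
    Ideal.map (Ideal.Quotient.mk (⊤ : Submodule R M).annihilator)
        (Ideal.span (gradedRadical 𝒜 (N.colon ⊤))) =
      Ideal.map (Ideal.Quotient.mk (⊤ : Submodule R M).annihilator)
        (Ideal.span (gradedRadical 𝒜 (N'.colon ⊤))) ↔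
      gradedRadical 𝒜 (N.colon ⊤) = gradedRadical 𝒜 (N'.colon ⊤) := by
  rw [Ideal.map_eq_iff_sup_ker_eq_of_surjective _ Ideal.Quotient.mk_surjective, Ideal.mk_ker,
    sup_eq_left.2 (hN.annihilator_le_span_gradedRadical_colon 𝒜),
    sup_eq_left.2 (hN'.annihilator_le_span_gradedRadical_colon 𝒜), span_gradedRadical,
    span_gradedRadical, gradedRadical_eq_homogeneousCore_radical,
    gradedRadical_eq_homogeneousCore_radical, SetLike.coe_set_eq]

/-- The quasi-Zariski space `qp.Spec_g(M)` is `T₀` iff the natural map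
`φ : qp.Spec_g(M) → Spec_g(R/Ann(M))`, `Q ↦ Gr((Q :_R M))/Ann(M)`, is injective. -/
theorem t0Space_iff_natural_map_injective :
    @T0Space (qpSpec 𝒜 ℳ) (qpZariski 𝒜 ℳ) ↔
      Function.Injective (fun Q : qpSpec 𝒜 ℳ =>
        Ideal.map (Ideal.Quotient.mk ((⊤ : Submodule R M).annihilator))
          (Ideal.span (gradedRadical 𝒜 (Q.1.colon ⊤)))) := by
  rw [@t0Space_iff_inseparable _ (qpZariski 𝒜 ℳ)]
  refine forall₂_congr fun Q P => ?_
  rw [qpZariski_inseparable_iff, map_mk_span_gradedRadical_colon_eq_iff 𝒜 Q.2.1.2.1 P.2.1.2.1]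

end
end
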